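/- Let N = (Q, Σ, δ, I, F) be an NFA with L = L(N). If the left language of every state of N is closed under the right Nerode quasiorder (for all q ∈ Q, cl_{≼_L}(W_{I,q}) = W_{I,q}), then the automata-based and Nerode quasiorders coincide: for all u, v, post_u(I) ⊆ post_v(I) iff u⁻¹L ⊆ v⁻¹L. -/

import Mathlib

/-- Left quotient (residual) u⁻¹L = {w | uw ∈ L}. -/
def leftQuot {α : Type*} (L : Set (List α)) (u : List α) : Set (List α) :=
  {w | u ++ w ∈ L}

/-- Upper closure of a set of words under the right Nerode quasiorder of L. -/
def clNerode {α : Type*} (L : Set (List α)) (S : Set (List α)) : Set (List α) :=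
  {w | ∃ x ∈ S, leftQuot L x ⊆ leftQuot L w}

theorem NFA.evalFrom_mono {α σ : Type*} (M : NFA α σ) {S T : Set σ} (h : S ⊆ T) (w : List α) :
    M.evalFrom S w ⊆ M.evalFrom T w := by
  rw [← Set.union_eq_right.2 h, M.evalFrom_union]
  exact Set.subset_union_left

theorem leftQuot_subset_of_evalFrom_subset {α σ : Type*} (M : NFA α σ) {u v : List α}
    (h : M.evalFrom M.start u ⊆ M.evalFrom M.start v) :
    leftQuot {w | (M.evalFrom M.start w ∩ M.accept).Nonempty} u ⊆
      leftQuot {w | (M.evalFrom M.start w ∩ M.accept).Nonempty} v := by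
  rintro w ⟨q, hq, hacc⟩
  rw [M.evalFrom_append] at hq
  refine ⟨q, ?_, hacc⟩
  rw [M.evalFrom_append]
  exact M.evalFrom_mono h w hq

theorem mem_of_clNerode_eq_of_leftQuot_subset {α : Type*} {L S : Set (List α)}
    (hS : clNerode L S = S) {u v : List α} (hu : u ∈ S) (h : leftQuot L u ⊆ leftQuot L v) :
    v ∈ S :=
  hS ▸ ⟨u, hu, h⟩

theorem closed_leftLangs_implies_autQO_eq_nerode_general {α σ : Type*}
    (M : NFA α σ) (L : Set (List α))
    (hL : L = {w : List α | (M.evalFrom M.start w ∩ M.accept).Nonempty})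
    (hclosed : ∀ q : σ,
      clNerode L {w : List α | q ∈ M.evalFrom M.start w} =
        {w : List α | q ∈ M.evalFrom M.start w}) :
    ∀ u v : List α,
      M.evalFrom M.start u ⊆ M.evalFrom M.start v ↔ leftQuot L u ⊆ leftQuot L v := by
  intro u v
  refine ⟨fun h => hL ▸ leftQuot_subset_of_evalFrom_subset M h, fun h q hq => ?_⟩
  exact mem_of_clNerode_eq_of_leftQuot_subset (hclosed q) hq h

/-- If the left language of every state is closed under the right Nerode quasiorder,
then the automata-based and Nerode quasiorders coincide. -/
theorem closed_leftLangs_implies_autQO_eq_nerode {α σ : Type*} [Fintype σ]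
    (M : NFA α σ) (L : Set (List α))
    (hL : L = {w : List α | (M.evalFrom M.start w ∩ M.accept).Nonempty})
    (hclosed : ∀ q : σ,
      clNerode L {w : List α | q ∈ M.evalFrom M.start w} =
        {w : List α | q ∈ M.evalFrom M.start w}) :
    ∀ u v : List α,
      M.evalFrom M.start u ⊆ M.evalFrom M.start v ↔ leftQuot L u ⊆ leftQuot L v :=
  closed_leftLangs_implies_autQO_eq_nerode_general M L hL hclosed
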